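/- arXiv:1402.5198 — 3 statements merged into one kernel-verified Lean document; each statement's English description precedes it below -/
import Mathlib

section
/- Let λ > 0 and let r₁, r₂, a, q be reals with 0 < λ a² < 1, satisfying the two relations 2m = (r₁ + r₂)(1 + λ(a² + r₁² + r₂²)) and a² + q² = r₁ r₂ (1 + λ(a² + r₁² + r₁r₂ + r₂²)), where m is defined by the first equation. Define Ξ = 1 − λ a² (i.e. Ξ = 1 + (Λ/3)a² with Λ = −3λ), and set Ā_C = (r₁² + a²)/Ξ, Ā_E = (r₂² + a²)/Ξ, J = m a/Ξ², Q = q/Ξ. Then 4J² + Q⁴ = Ā_C Ā_E [1 + 2λ(Ā_C + Ā_E + Q²) + λ²(Ā_C² + Ā_C Ā_E + Ā_E²)]. -/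
theorem stmt_2 (lam a q m r₁ r₂ Ξ AC AE J Q : ℝ)
    (hlam : 0 < lam) (ha0 : 0 < lam * a ^ 2) (ha1 : lam * a ^ 2 < 1)
    (h1 : 2 * m = (r₁ + r₂) * (1 + lam * (a ^ 2 + r₁ ^ 2 + r₂ ^ 2)))
    (h2 : a ^ 2 + q ^ 2 = r₁ * r₂ * (1 + lam * (a ^ 2 + r₁ ^ 2 + r₁ * r₂ + r₂ ^ 2)))
    (hΞ : Ξ = 1 - lam * a ^ 2)
    (hAC : AC = (r₁ ^ 2 + a ^ 2) / Ξ) (hAE : AE = (r₂ ^ 2 + a ^ 2) / Ξ)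
    (hJ : J = m * a / Ξ ^ 2) (hQ : Q = q / Ξ) :
    4 * J ^ 2 + Q ^ 4
      = AC * AE * (1 + 2 * lam * (AC + AE + Q ^ 2)
          + lam ^ 2 * (AC ^ 2 + AC * AE + AE ^ 2)) := by
  subst hΞ
  have hΞne : 1 - lam * a ^ 2 ≠ 0 := by nlinarith
  have hm : m = (r₁ + r₂) * (1 + lam * (a ^ 2 + r₁ ^ 2 + r₂ ^ 2)) / 2 := by linarith
  have hQ2 : Q ^ 2 = (r₁ * r₂ * (1 + lam * (a ^ 2 + r₁ ^ 2 + r₁ * r₂ + r₂ ^ 2)) - a ^ 2) / (1 - lam * a ^ 2) ^ 2 := by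
    rw [hQ]; rw [div_pow]; rw [show q ^ 2 = r₁ * r₂ * (1 + lam * (a ^ 2 + r₁ ^ 2 + r₁ * r₂ + r₂ ^ 2)) - a ^ 2 by linarith]
  have h4 : Q ^ 4 = (Q ^ 2) ^ 2 := by ring
  rw [h4, hQ2, hJ, hm, hAC, hAE]
  field_simp
  ring
end

section
/- Let λ ≥ 0 and Ā_C, Ā_E, J, Q be reals with 0 < Ā_C ≤ Ā_E, satisfying 4J² + Q⁴ = Ā_C Ā_E [1 + 2λ(Ā_C + Ā_E + Q²) + λ²(Ā_C² + Ā_C Ā_E + Ā_E²)]. Then 4J² + Q⁴ ≤ Ā_E² [1 + 2λ(2Ā_E + Q²) + 3λ²Ā_E²], with equality if and only if Ā_C = Ā_E. -/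
/-!
Substituting the horizon equation, the gap between the two sides of the inequality factors as
`Ā_E (Ā_E - Ā_C) B`, where `B = 1 + 2λ(2Ā_E + Ā_C + Q²) + λ²(3Ā_E² + 2Ā_C Ā_E + Ā_C²)` is
positive for `λ ≥ 0`. Hence the gap is nonnegative, and it vanishes exactly when `Ā_C = Ā_E`.
-/

lemma degenerate_sub_horizon_eq (lam x y q : ℝ) :
    y ^ 2 * (1 + 2 * lam * (2 * y + q) + 3 * lam ^ 2 * y ^ 2)
      - x * y * (1 + 2 * lam * (x + y + q) + lam ^ 2 * (x ^ 2 + x * y + y ^ 2))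
      = y * (y - x) * (1 + 2 * lam * (2 * y + x + q) + lam ^ 2 * (3 * y ^ 2 + 2 * x * y + x ^ 2)) := by
  ring

lemma horizon_gap_factor_pos {lam x y q : ℝ} (hlam : 0 ≤ lam) (hx : 0 ≤ x) (hy : 0 ≤ y)
    (hq : 0 ≤ q) :
    0 < 1 + 2 * lam * (2 * y + x + q) + lam ^ 2 * (3 * y ^ 2 + 2 * x * y + x ^ 2) := by
  positivity

theorem stmt_3 (lam AC AE J Q : ℝ) (hlam : 0 ≤ lam)
    (hAC : 0 < AC) (hle : AC ≤ AE)
    (heq : 4 * J ^ 2 + Q ^ 4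
      = AC * AE * (1 + 2 * lam * (AC + AE + Q ^ 2)
          + lam ^ 2 * (AC ^ 2 + AC * AE + AE ^ 2))) :
    4 * J ^ 2 + Q ^ 4 ≤ AE ^ 2 * (1 + 2 * lam * (2 * AE + Q ^ 2) + 3 * lam ^ 2 * AE ^ 2)
    ∧ (4 * J ^ 2 + Q ^ 4 = AE ^ 2 * (1 + 2 * lam * (2 * AE + Q ^ 2) + 3 * lam ^ 2 * AE ^ 2)
        ↔ AC = AE) := by
  have hAE : 0 < AE := hAC.trans_le hle
  have hB := horizon_gap_factor_pos hlam hAC.le hAE.le (sq_nonneg Q)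
  have hgap := degenerate_sub_horizon_eq lam AC AE (Q ^ 2)
  rw [← heq] at hgap
  rw [← sub_nonneg, eq_comm, ← sub_eq_zero, hgap]
  constructor
  · have := sub_nonneg.mpr hle
    positivity
  · rw [eq_comm (a := AC), ← sub_eq_zero (a := AE)]
    simp [hAE.ne', hB.ne']
end

section
/- Let λ > 0 and r₊, a, q be reals with λa² < 1 and 1 − λr₊² > 0, satisfying the constraint a² = (r₊²(1 + 3λr₊²) − q²)/(1 − λr₊²). Define Ξ = 1 − λa², J = r₊(1 + 2λr₊² + λa²)a/Ξ², Q = q/Ξ, Ā_E = (r₊² + a²)/Ξ. Then 4J² + Q⁴ = Ā_E²[1 + 2λ(2Ā_E + Q²) + 3λ²Ā_E²]. -/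
/-!
Clearing the denominators `Ξ = 1 - λa²` turns the degenerate horizon equation into a polynomial
identity in `λ, r₊, a, q²`. It holds once the extremality constraint is used to eliminate `q²`
in favour of `r₊` and `a`.
-/

theorem sq_eq_of_extremality_constraint {K : Type*} [Field K] {lam rp a q : K}
    (hr : 1 - lam * rp ^ 2 ≠ 0)
    (hcon : a ^ 2 = (rp ^ 2 * (1 + 3 * lam * rp ^ 2) - q ^ 2) / (1 - lam * rp ^ 2)) :
    q ^ 2 = rp ^ 2 * (1 + 3 * lam * rp ^ 2) - a ^ 2 * (1 - lam * rp ^ 2) := by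
  rw [eq_div_iff hr] at hcon
  linear_combination hcon

theorem degenerate_horizon_identity_cleared {R : Type*} [CommRing R] {lam rp a q : R}
    (hq : q ^ 2 = rp ^ 2 * (1 + 3 * lam * rp ^ 2) - a ^ 2 * (1 - lam * rp ^ 2)) :
    4 * (rp * (1 + 2 * lam * rp ^ 2 + lam * a ^ 2) * a) ^ 2 + (q ^ 2) ^ 2 =
      (rp ^ 2 + a ^ 2) ^ 2 * ((1 - lam * a ^ 2) ^ 2 + 4 * lam * (rp ^ 2 + a ^ 2) * (1 - lam * a ^ 2)
        + 2 * lam * q ^ 2 + 3 * lam ^ 2 * (rp ^ 2 + a ^ 2) ^ 2) := by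
  rw [hq]
  ring

theorem stmt_7_general (lam rp a q Ξ J Q AE : ℝ)
    (ha : lam * a ^ 2 < 1) (hr : 1 - lam * rp ^ 2 > 0)
    (hcon : a ^ 2 = (rp ^ 2 * (1 + 3 * lam * rp ^ 2) - q ^ 2) / (1 - lam * rp ^ 2))
    (hΞ : Ξ = 1 - lam * a ^ 2)
    (hJ : J = rp * (1 + 2 * lam * rp ^ 2 + lam * a ^ 2) * a / Ξ ^ 2)
    (hQ : Q = q / Ξ) (hAE : AE = (rp ^ 2 + a ^ 2) / Ξ) :
    4 * J ^ 2 + Q ^ 4 = AE ^ 2 * (1 + 2 * lam * (2 * AE + Q ^ 2) + 3 * lam ^ 2 * AE ^ 2) := by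
  have hΞ0 : Ξ ≠ 0 := by rw [hΞ]; linarith
  have hcleared := degenerate_horizon_identity_cleared
    (sq_eq_of_extremality_constraint hr.ne' hcon)
  rw [← hΞ] at hcleared
  subst hJ hQ hAE
  field_simp
  linear_combination hcleared

theorem stmt_7 (lam rp a q Ξ J Q AE : ℝ) (hlam : 0 < lam)
    (ha : lam * a ^ 2 < 1) (hr : 1 - lam * rp ^ 2 > 0)
    (hcon : a ^ 2 = (rp ^ 2 * (1 + 3 * lam * rp ^ 2) - q ^ 2) / (1 - lam * rp ^ 2))
    (hΞ : Ξ = 1 - lam * a ^ 2)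
    (hJ : J = rp * (1 + 2 * lam * rp ^ 2 + lam * a ^ 2) * a / Ξ ^ 2)
    (hQ : Q = q / Ξ) (hAE : AE = (rp ^ 2 + a ^ 2) / Ξ) :
    4 * J ^ 2 + Q ^ 4 = AE ^ 2 * (1 + 2 * lam * (2 * AE + Q ^ 2) + 3 * lam ^ 2 * AE ^ 2) :=
  stmt_7_general lam rp a q Ξ J Q AE ha hr hcon hΞ hJ hQ hAE
end
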